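/- Let S, T be selfadjoint regular operators in a Hilbert C*-module E over A satisfying Assumption: there is a core 𝓔 for T such that (S − iμ)^{-1}(𝓔) ⊆ dom(S) ∩ dom(T), T(S − iμ)^{-1}(𝓔) ⊆ dom(S), and [S,T](S − iμ)^{-1} : 𝓔 → E extends to a bounded adjointable operator X_μ for all real μ ≠ 0. Then there exists C > 0 such that for all ξ ∈ dom([S,T]) one has ±i⟨[S,T]ξ, ξ⟩ ≤ (1/2)⟨Sξ, Sξ⟩ + C⟨ξ,ξ⟩ as selfadjoint elements of A. -/

import Mathlib

/-!
Fix `μ ≥ 1` and write `η = (S - iμ) ξ`. Since `T` is closed and `𝓔` is a core, `[S,T] ξ = X_μ η`,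
so `⟪[S,T] ξ, ξ⟫ = ⟪G η, η⟫` with `G = (S + iμ)⁻¹ X_μ`. On the core `X_μ = [S,T] (S - iμ)⁻¹`, and
the commutator of two symmetric operators is skew-symmetric, so `G` is skew-adjoint; in particular
it is `A`-linear. On the core also `X_μ = X_1 (S - i) (S - iμ)⁻¹`, whence `‖G‖ ≤ ‖X_1‖ / μ ≤ 1/2`
for `μ` large. Paschke's inequality gives `⟪G η, G η⟫ ≤ ¼ ⟪η, η⟫`, and expanding
`0 ≤ ⟪2iGη ± η, 2iGη ± η⟫` yields `± i ⟪G η, η⟫ ≤ ½ ⟪η, η⟫ = ½ ⟪S ξ, S ξ⟫ + ½ μ² ⟪ξ, ξ⟫`.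
-/

open scoped ComplexOrder RightActions InnerProductSpace
open CStarModule

noncomputable section

/-- The class `CStarModule` as it stood in Mathlib of December 2024 (right `A`-action through
`Aᵐᵒᵖ`); Mathlib's `CStarModule` now uses a left action `SMul A E` with other axioms. -/
class RightCStarModule (A : outParam <| Type*) (E : Type*) [NonUnitalSemiring A] [StarRing A]
    [Module ℂ A] [AddCommGroup E] [Module ℂ E] [PartialOrder A] [SMul Aᵐᵒᵖ E] [Norm A] [Norm E]
    extends Inner A E where
  inner_add_right {x} {y} {z} : inner x (y + z) = inner x y + inner x z
  inner_self_nonneg {x} : 0 ≤ inner x x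
  inner_self {x} : inner x x = 0 ↔ x = 0
  inner_op_smul_right {a : A} {x y : E} : inner x (y <• a) = inner x y * a
  inner_smul_right_complex {z : ℂ} {x} {y} : inner x (z • y) = z • inner x y
  star_inner x y : star (inner x y) = inner y x
  norm_eq_sqrt_norm_inner_self x : ‖x‖ = √‖inner x x‖

/-- An unbounded operator in a Hilbert C⋆-module `E`: a `ℂ`-linear map defined on a
`ℂ`-submodule of `E`. -/
structure UnboundedOperator (E : Type*) [NormedAddCommGroup E] [Module ℂ E] where
  dom : Submodule ℂ E
  toFun : dom →ₗ[ℂ] E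

namespace UnboundedOperator

variable {A E : Type*} [CStarAlgebra A] [PartialOrder A] [StarOrderedRing A]
  [NormedAddCommGroup E] [Module ℂ E] [SMul Aᵐᵒᵖ E] [RightCStarModule A E]

/-- `y` and `z` satisfy the adjoint relation for `T`: `⟪Tx, y⟫ = ⟪x, z⟫` for all `x ∈ dom T`. -/
def AdjRel (T : UnboundedOperator E) (y z : E) : Prop :=
  ∀ x : T.dom, ⟪T.toFun x, y⟫_A = ⟪(x : E), z⟫_A

/-- The domain of the adjoint of `T`. -/
def adjDom (T : UnboundedOperator E) : Set E := {y | ∃ z, T.AdjRel (A := A) y z}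

/-- `T` is semiregular: both `T` and its adjoint are densely defined. -/
def Semiregular (T : UnboundedOperator E) : Prop :=
  Dense (T.dom : Set E) ∧ Dense (T.adjDom (A := A))

/-- The graph of `T` as a subset of `E × E`. -/
def graph (T : UnboundedOperator E) : Set (E × E) :=
  {p | ∃ x : T.dom, p = ((x : E), T.toFun x)}

/-- `T` is a closed operator. -/
def IsClosedOp (T : UnboundedOperator E) : Prop := IsClosed T.graph

/-- `S` is the adjoint of `T`. -/
def IsAdjointOf (S T : UnboundedOperator E) : Prop :=
  (S.dom : Set E) = T.adjDom (A := A) ∧ ∀ y : S.dom, T.AdjRel (A := A) (y : E) (S.toFun y)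

/-- `T` is symmetric. -/
def Symmetric (T : UnboundedOperator E) : Prop :=
  ∀ x y : T.dom, ⟪T.toFun x, (y : E)⟫_A = ⟪(x : E), T.toFun y⟫_A

/-- `T` is selfadjoint: it is its own adjoint. -/
def SelfAdjointOp (T : UnboundedOperator E) : Prop := IsAdjointOf (A := A) T T

/-- The range of `I + S ∘ T` (for `S` the adjoint of `T` this is the range of `I + T⋆T`). -/
def ranIdAddMul (S T : UnboundedOperator E) : Set E :=
  {y | ∃ (x : T.dom) (hx : T.toFun x ∈ S.dom), y = (x : E) + S.toFun ⟨T.toFun x, hx⟩}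

/-- `T` is regular: it is closed, semiregular, and `I + T⋆T` has dense range. -/
def Regular (T : UnboundedOperator E) : Prop :=
  T.IsClosedOp ∧ T.Semiregular (A := A) ∧
    ∀ S : UnboundedOperator E, IsAdjointOf (A := A) S T → Dense (ranIdAddMul S T)

/-- `Tc` is the closure of `T`: its graph is the closure of the graph of `T`. -/
def IsClosureOf (Tc T : UnboundedOperator E) : Prop :=
  Tc.graph = closure T.graph

end UnboundedOperator

namespace UnboundedOperator

variable {A E : Type*} [CStarAlgebra A] [PartialOrder A] [StarOrderedRing A]
  [NormedAddCommGroup E] [Module ℂ E] [SMul Aᵐᵒᵖ E] [RightCStarModule A E]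

/-- The standing assumption on the pair `(S, T)` of selfadjoint regular operators: there is a
core `𝓔` for `T` such that `(S − iμ)⁻¹ 𝓔 ⊆ dom S ∩ dom T`, `T (S − iμ)⁻¹ 𝓔 ⊆ dom S`, and the
commutator `[S, T] (S − iμ)⁻¹` defined on `𝓔` extends to a bounded adjointable operator `X_μ`
on `E`, for every real `μ ≠ 0`. Here `res μ = (S − iμ)⁻¹` is the resolvent of `S`. -/
structure SumAssumption (S T : UnboundedOperator E) : Type _ where
  core : Submodule ℂ E
  core_sub : ∀ x ∈ core, x ∈ T.dom
  /-- `core` is a core for `T`: it is dense in `dom T` for the graph norm. -/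
  core_dense : ∀ (x : T.dom) (ε : ℝ), 0 < ε → ∃ (y : E) (hy : y ∈ core),
    ‖(x : E) - y‖ ^ 2 + ‖T.toFun x - T.toFun ⟨y, core_sub y hy⟩‖ ^ 2 < ε
  /-- the resolvent `res μ = (S − iμ)⁻¹` of the selfadjoint regular operator `S` -/
  res : ℝ → E →L[ℂ] E
  res_mem_S : ∀ (μ : ℝ), μ ≠ 0 → ∀ x : E, res μ x ∈ S.dom
  res_eq : ∀ (μ : ℝ) (hμ : μ ≠ 0) (x : E),
    S.toFun ⟨res μ x, res_mem_S μ hμ x⟩ - (Complex.I * (μ : ℂ)) • res μ x = x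
  res_mem_T : ∀ (μ : ℝ) (hμ : μ ≠ 0), ∀ x ∈ core, res μ x ∈ T.dom
  Tres_mem_S : ∀ (μ : ℝ) (hμ : μ ≠ 0) (x : E) (hx : x ∈ core),
    T.toFun ⟨res μ x, res_mem_T μ hμ x hx⟩ ∈ S.dom
  /-- `[S, T] (S − iμ)⁻¹`, defined on the core, extends to a bounded operator `X_μ` on `E`;
  here `T S (S − iμ)⁻¹ x = T x + iμ T (S − iμ)⁻¹ x` for `x` in the core. -/
  comm_bounded : ∀ (μ : ℝ) (hμ : μ ≠ 0), ∃ X : E →L[ℂ] E, ∀ (x : E) (hx : x ∈ core),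
    X x = S.toFun ⟨T.toFun ⟨res μ x, res_mem_T μ hμ x hx⟩, Tres_mem_S μ hμ x hx⟩
      - T.toFun ⟨x, core_sub x hx⟩
      - (Complex.I * (μ : ℂ)) • T.toFun ⟨res μ x, res_mem_T μ hμ x hx⟩

end UnboundedOperator

open Filter Topology

namespace RightCStarModule

variable {A E : Type*} [CStarAlgebra A] [PartialOrder A]
  [NormedAddCommGroup E] [Module ℂ E] [SMul Aᵐᵒᵖ E] [RightCStarModule A E]

attribute [simp] inner_add_right inner_op_smul_right inner_smul_right_complex star_inner

@[simp] lemma inner_add_left {x y z : E} : ⟪x + y, z⟫_A = ⟪x, z⟫_A + ⟪y, z⟫_A := by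
  rw [← star_inner, inner_add_right, star_add, star_inner, star_inner]

@[simp] lemma inner_op_smul_left {a : A} {x y : E} : ⟪x <• a, y⟫_A = star a * ⟪x, y⟫_A := by
  rw [← star_inner, inner_op_smul_right, star_mul, star_inner]

@[simp] lemma inner_smul_left_complex {z : ℂ} {x y : E} :
    ⟪z • x, y⟫_A = star z • ⟪x, y⟫_A := by
  rw [← star_inner, inner_smul_right_complex, star_smul, star_inner]

@[simp] lemma inner_smul_right_real {r : ℝ} {x y : E} : ⟪x, r • y⟫_A = r • ⟪x, y⟫_A := by
  rw [← Complex.coe_smul, inner_smul_right_complex, Complex.coe_smul]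

@[simp] lemma inner_smul_left_real {r : ℝ} {x y : E} : ⟪r • x, y⟫_A = r • ⟪x, y⟫_A := by
  rw [← Complex.coe_smul, inner_smul_left_complex, Complex.star_def, Complex.conj_ofReal,
    Complex.coe_smul]

variable (A) in
def innerₛₗ : E →ₗ⋆[ℂ] E →ₗ[ℂ] A where
  toFun x :=
    { toFun := fun y => ⟪x, y⟫_A
      map_add' := fun _ _ => inner_add_right
      map_smul' := fun _ _ => inner_smul_right_complex }
  map_add' _ _ := by ext; exact inner_add_left
  map_smul' _ _ := by ext; exact inner_smul_left_complex

lemma innerₛₗ_apply {x y : E} : innerₛₗ A x y = ⟪x, y⟫_A := rfl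

@[simp] lemma inner_zero_left {x : E} : ⟪0, x⟫_A = 0 := by simp [← innerₛₗ_apply]
@[simp] lemma inner_neg_right {x y : E} : ⟪x, -y⟫_A = -⟪x, y⟫_A := by simp [← innerₛₗ_apply]
@[simp] lemma inner_neg_left {x y : E} : ⟪-x, y⟫_A = -⟪x, y⟫_A := by simp [← innerₛₗ_apply]
@[simp] lemma inner_sub_right {x y z : E} : ⟪x, y - z⟫_A = ⟪x, y⟫_A - ⟪x, z⟫_A := by
  simp [← innerₛₗ_apply]
@[simp] lemma inner_sub_left {x y z : E} : ⟪x - y, z⟫_A = ⟪x, z⟫_A - ⟪y, z⟫_A := by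
  simp [← innerₛₗ_apply]

lemma ext_inner_left {x y : E} (h : ∀ w : E, ⟪x, w⟫_A = ⟪y, w⟫_A) : x = y := by
  rw [← sub_eq_zero, ← inner_self (A := A), inner_sub_left, h, sub_self]

lemma map_op_smul_of_skew {G : E → E} (hG : ∀ x y, ⟪G x, y⟫_A = -⟪x, G y⟫_A) (x : E) (a : A) :
    G (x <• a) = G x <• a :=
  ext_inner_left fun w => by rw [hG, inner_op_smul_left, inner_op_smul_left, hG, mul_neg]

lemma norm_sq_eq_norm_inner_self (x : E) : ‖x‖ ^ 2 = ‖⟪x, x⟫_A‖ := by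
  rw [norm_eq_sqrt_norm_inner_self (A := A), Real.sq_sqrt (norm_nonneg _)]

lemma norm_smul_complex {A : Type*} [CStarAlgebra A] [PartialOrder A] [SMul Aᵐᵒᵖ E]
    [RightCStarModule A E] (c : ℂ) (x : E) : ‖c • x‖ = ‖c‖ * ‖x‖ := by
  rw [norm_eq_sqrt_norm_inner_self (A := A), norm_eq_sqrt_norm_inner_self (A := A) x,
    inner_smul_left_complex, inner_smul_right_complex, smul_smul, norm_smul, norm_mul,
    norm_star, Real.sqrt_mul (by positivity), Real.sqrt_mul_self (norm_nonneg _)]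

instance {A : Type*} [CStarAlgebra A] [PartialOrder A] [SMul Aᵐᵒᵖ E] [RightCStarModule A E] :
    NormedSpace ℂ E :=
  NormedSpace.ofCore
    { norm_nonneg := norm_nonneg
      norm_eq_zero_iff := fun _ => norm_eq_zero
      norm_smul := norm_smul_complex (A := A)
      norm_triangle := norm_add_le }

section Order

variable [StarOrderedRing A]

lemma norm_le_norm_of_inner_self_le {x y : E} (h : ⟪x, x⟫_A ≤ ⟪y, y⟫_A) : ‖x‖ ≤ ‖y‖ := by
  refine (pow_le_pow_iff_left₀ (norm_nonneg x) (norm_nonneg y) two_ne_zero).mp ?_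
  rw [norm_sq_eq_norm_inner_self (A := A), norm_sq_eq_norm_inner_self (A := A)]
  exact CStarAlgebra.norm_le_norm_of_nonneg_of_le inner_self_nonneg h

lemma inner_self_le_norm_sq_smul_one (x : E) : ⟪x, x⟫_A ≤ ‖x‖ ^ 2 • (1 : A) := by
  rw [norm_sq_eq_norm_inner_self (A := A), ← Algebra.algebraMap_eq_smul_one]
  exact IsSelfAdjoint.le_algebraMap_norm_self (star_inner x x)

lemma inner_add_inner_swap_le (u v : E) : ⟪u, v⟫_A + ⟪v, u⟫_A ≤ ⟪u, u⟫_A + ⟪v, v⟫_A := by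
  have h : (0 : A) ≤ ⟪u - v, u - v⟫_A := inner_self_nonneg
  simp only [inner_sub_left, inner_sub_right] at h
  rw [← sub_nonneg]
  convert h using 1
  abel

lemma inner_mul_inner_swap_le (x y : E) : ⟪y, x⟫_A * ⟪x, y⟫_A ≤ ‖x‖ ^ 2 • ⟪y, y⟫_A := by
  rcases eq_or_ne x 0 with rfl | hx
  · simp
  have hr : 0 < ‖x‖ ^ 2 := by positivity
  rw [← star_inner x y]
  have hxx : star ⟪x, y⟫_A * ⟪x, x⟫_A * ⟪x, y⟫_A ≤ ‖x‖ ^ 2 • (star ⟪x, y⟫_A * ⟪x, y⟫_A) := by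
    rw [norm_sq_eq_norm_inner_self (A := A) x]
    exact CStarAlgebra.star_left_conjugate_le_norm_smul (star_inner x x)
  have hexp : ⟪x <• ⟪x, y⟫_A - ‖x‖ ^ 2 • y, x <• ⟪x, y⟫_A - ‖x‖ ^ 2 • y⟫_A
      = star ⟪x, y⟫_A * ⟪x, x⟫_A * ⟪x, y⟫_A - (2 * ‖x‖ ^ 2) • (star ⟪x, y⟫_A * ⟪x, y⟫_A)
        + (‖x‖ ^ 2 * ‖x‖ ^ 2) • ⟪y, y⟫_A := by
    simp only [inner_sub_left, inner_sub_right, inner_op_smul_left, inner_op_smul_right,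
      inner_smul_left_real, inner_smul_right_real, ← star_inner x y, sub_mul, smul_mul_assoc]
    module
  have h : (0 : A) ≤ ‖x‖ ^ 2 • (‖x‖ ^ 2 • ⟪y, y⟫_A - star ⟪x, y⟫_A * ⟪x, y⟫_A) := by
    calc (0 : A) ≤ _ := inner_self_nonneg (x := x <• ⟪x, y⟫_A - ‖x‖ ^ 2 • y)
      _ ≤ ‖x‖ ^ 2 • (star ⟪x, y⟫_A * ⟪x, y⟫_A) - (2 * ‖x‖ ^ 2) • (star ⟪x, y⟫_A * ⟪x, y⟫_A)
          + (‖x‖ ^ 2 * ‖x‖ ^ 2) • ⟪y, y⟫_A := by rw [hexp]; gcongr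
      _ = _ := by module
  have := smul_nonneg (inv_pos.mpr hr).le h
  rwa [inv_smul_smul₀ hr.ne', sub_nonneg] at this

lemma norm_inner_le (x y : E) : ‖⟪x, y⟫_A‖ ≤ ‖x‖ * ‖y‖ := by
  refine (pow_le_pow_iff_left₀ (norm_nonneg _) (by positivity) two_ne_zero).mp ?_
  calc ‖⟪x, y⟫_A‖ ^ 2 = ‖⟪y, x⟫_A * ⟪x, y⟫_A‖ := by
        rw [← star_inner x y, CStarRing.norm_star_mul_self, sq]
    _ ≤ ‖‖x‖ ^ 2 • ⟪y, y⟫_A‖ := by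
        refine CStarAlgebra.norm_le_norm_of_nonneg_of_le ?_ (inner_mul_inner_swap_le x y)
        rw [← star_inner x y]
        exact star_mul_self_nonneg _
    _ = (‖x‖ * ‖y‖) ^ 2 := by
        rw [norm_smul, norm_pow, norm_norm, ← norm_sq_eq_norm_inner_self (A := A), mul_pow]

lemma continuous_inner_right (w : E) : Continuous fun x : E => ⟪w, x⟫_A :=
  AddMonoidHomClass.continuous_of_bound (innerₛₗ A w) ‖w‖ fun x => norm_inner_le w x

lemma continuous_inner_left (w : E) : Continuous fun x : E => ⟪x, w⟫_A :=
  ((continuous_inner_right w).star).congr fun x => star_inner w x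

lemma inner_map_map_le_smul_of_le {G : E → E} {c : ℝ}
    (hG : ∀ y, ‖G y‖ ≤ c * ‖y‖) (hGA : ∀ (y : E) (a : A), G (y <• a) = G y <• a) {x : E}
    {b : A} (hb : IsStrictlyPositive b) (hxb : ⟪x, x⟫_A ≤ b) :
    ⟪G x, G x⟫_A ≤ c ^ 2 • b := by
  -- rescale `x` by `h = b ^ (-1/2)`, so that `‖x h‖ ≤ 1`
  set h := CFC.sqrt (Ring.inverse b)
  have hh : star h = h := (IsSelfAdjoint.of_nonneg (CFC.sqrt_nonneg _)).star_eq
  have hconj : ∀ y : E, ⟪y <• h, y <• h⟫_A = CFC.conjSqrt (Ring.inverse b) ⟪y, y⟫_A := by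
    intro y
    rw [inner_op_smul_left, inner_op_smul_right, hh, CFC.conjSqrt_apply, mul_assoc]
  have hxh : ‖x <• h‖ ≤ 1 := by
    refine (pow_le_one_iff_of_nonneg (norm_nonneg _) two_ne_zero).mp ?_
    rw [norm_sq_eq_norm_inner_self (A := A), CStarAlgebra.norm_le_iff_le_algebraMap _ zero_le_one
      inner_self_nonneg, map_one, hconj, ← CFC.conjSqrt_ringInverse_self b]
    exact CFC.conjSqrt_le_conjSqrt hxb
  have hGxh : CFC.conjSqrt (Ring.inverse b) ⟪G x, G x⟫_A ≤ c ^ 2 • (1 : A) := by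
    rw [← hconj, ← hGA]
    refine (inner_self_le_norm_sq_smul_one _).trans (smul_le_smul_of_nonneg_right ?_ zero_le_one)
    calc ‖G (x <• h)‖ ^ 2 ≤ (c * ‖x <• h‖) ^ 2 := by gcongr; exact hG _
      _ ≤ c ^ 2 := by
          rw [mul_pow]; exact mul_le_of_le_one_right (sq_nonneg c) (pow_le_one₀ (norm_nonneg _) hxh)
  calc ⟪G x, G x⟫_A = CFC.conjSqrt b (CFC.conjSqrt (Ring.inverse b) ⟪G x, G x⟫_A) :=
        (CFC.conjSqrt_conjSqrt_ringInverse b _).symm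
    _ ≤ CFC.conjSqrt b (c ^ 2 • (1 : A)) := CFC.conjSqrt_le_conjSqrt hGxh
    _ = c ^ 2 • b := by rw [map_smul, CFC.conjSqrt_one b]

/-- Paschke's inequality for bounded `A`-linear maps. -/
theorem inner_map_map_le_smul {G : E → E} {c : ℝ} (hG : ∀ y, ‖G y‖ ≤ c * ‖y‖)
    (hGA : ∀ (y : E) (a : A), G (y <• a) = G y <• a) (x : E) :
    ⟪G x, G x⟫_A ≤ c ^ 2 • ⟪x, x⟫_A := by
  have hlim : Tendsto (fun ε : ℝ => c ^ 2 • (⟪x, x⟫_A + algebraMap ℝ A ε)) (𝓝[>] 0)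
      (𝓝 (c ^ 2 • ⟪x, x⟫_A)) := by
    have : Continuous fun ε : ℝ => c ^ 2 • (⟪x, x⟫_A + algebraMap ℝ A ε) := by fun_prop
    simpa using (this.tendsto 0).mono_left nhdsWithin_le_nhds
  refine ge_of_tendsto hlim (eventually_nhdsWithin_of_forall fun ε (hε : 0 < ε) => ?_)
  have hpos := isStrictlyPositive_algebraMap (A := A) hε
  exact inner_map_map_le_smul_of_le hG hGA (hpos.nonneg_add inner_self_nonneg)
    (le_add_of_nonneg_right hpos.nonneg)

lemma skew_of_dense {G : E → E} (hGc : Continuous G) {D : Set E} (hD : Dense D)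
    (hG : ∀ x ∈ D, ∀ y ∈ D, ⟪G x, y⟫_A = -⟪x, G y⟫_A) (x y : E) :
    ⟪G x, y⟫_A = -⟪x, G y⟫_A := by
  have hDx : ∀ y ∈ D, ∀ x, ⟪G x, y⟫_A = -⟪x, G y⟫_A := fun y hy =>
    hD.induction (fun x hx => hG x hx y hy)
      (isClosed_eq ((continuous_inner_left y).comp hGc) (continuous_inner_left (G y)).neg)
  exact hD.induction (fun y hy => hDx y hy x)
    (isClosed_eq (continuous_inner_right (G x)) ((continuous_inner_right x).comp hGc).neg) y

lemma I_smul_inner_map_self_le_of_skew {G : E → E} (hG : ∀ x y, ⟪G x, y⟫_A = -⟪x, G y⟫_A)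
    {c : ℝ} (hc : 0 < c) {x : E} (hx : ⟪G x, G x⟫_A ≤ c ^ 2 • ⟪x, x⟫_A) :
    Complex.I • ⟪G x, x⟫_A ≤ c • ⟪x, x⟫_A := by
  have hxG : ⟪x, G x⟫_A = -⟪G x, x⟫_A := by rw [hG, neg_neg]
  have hu : ⟪(-Complex.I) • G x, (-Complex.I) • G x⟫_A = ⟪G x, G x⟫_A := by
    simp [smul_smul, Complex.conj_I]
  have key : (2 * c) • (Complex.I • ⟪G x, x⟫_A) ≤ (2 * c) • (c • ⟪x, x⟫_A) :=
    calc (2 * c) • (Complex.I • ⟪G x, x⟫_A)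
        = ⟪(-Complex.I) • G x, c • x⟫_A + ⟪c • x, (-Complex.I) • G x⟫_A := by
          simp only [inner_smul_left_real, inner_smul_right_real, inner_smul_left_complex,
            inner_smul_right_complex, hxG, star_neg, Complex.star_def, Complex.conj_I]
          module
      _ ≤ ⟪(-Complex.I) • G x, (-Complex.I) • G x⟫_A + ⟪c • x, c • x⟫_A :=
          inner_add_inner_swap_le _ _
      _ ≤ c ^ 2 • ⟪x, x⟫_A + c ^ 2 • ⟪x, x⟫_A := by
          rw [hu, inner_smul_left_real, inner_smul_right_real, smul_smul, ← sq]
          exact add_le_add_left hx _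
      _ = (2 * c) • (c • ⟪x, x⟫_A) := by module
  exact (smul_le_smul_iff_of_pos_left (by positivity)).mp key

lemma neg_I_smul_inner_map_self_le_of_skew {G : E → E}
    (hG : ∀ x y, ⟪G x, y⟫_A = -⟪x, G y⟫_A) {c : ℝ} (hc : 0 < c) {x : E}
    (hx : ⟪G x, G x⟫_A ≤ c ^ 2 • ⟪x, x⟫_A) :
    -(Complex.I • ⟪G x, x⟫_A) ≤ c • ⟪x, x⟫_A := by
  have hG' : ∀ x y, ⟪-G x, y⟫_A = -⟪x, -G y⟫_A := fun x y => by
    rw [inner_neg_left, inner_neg_right, hG]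
  simpa using I_smul_inner_map_self_le_of_skew hG' hc (by simpa using hx)

end Order

end RightCStarModule

namespace UnboundedOperator

variable {A E : Type*} [CStarAlgebra A] [PartialOrder A]
  [NormedAddCommGroup E] [Module ℂ E] [SMul Aᵐᵒᵖ E] [RightCStarModule A E]

lemma SelfAdjointOp.symmetric {T : UnboundedOperator E} (hT : T.SelfAdjointOp (A := A)) :
    T.Symmetric (A := A) :=
  fun x y => hT.2 y x

lemma apply_eq_of_mem_graph (T : UnboundedOperator E) {x y : E} (h : (x, y) ∈ T.graph)
    (hx : x ∈ T.dom) : T.toFun ⟨x, hx⟩ = y := by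
  obtain ⟨z, hz⟩ := h
  obtain ⟨rfl, rfl⟩ := Prod.ext_iff.mp hz
  rfl

namespace Symmetric

variable {S T : UnboundedOperator E}

lemma inner_sub_I_smul_left (hS : S.Symmetric (A := A)) (μ : ℝ) (u v : S.dom) :
    ⟪S.toFun u - (Complex.I * μ) • (u : E), v⟫_A
      = ⟪(u : E), S.toFun v - (Complex.I * ((-μ : ℝ) : ℂ)) • (v : E)⟫_A := by
  simp only [RightCStarModule.inner_sub_left, RightCStarModule.inner_sub_right,
    RightCStarModule.inner_smul_left_complex, RightCStarModule.inner_smul_right_complex,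
    hS u v, star_mul', Complex.star_def, Complex.conj_I, Complex.conj_ofReal, Complex.ofReal_neg]
  module

lemma inner_sub_I_smul_self (hS : S.Symmetric (A := A)) (μ : ℝ) (v : S.dom) :
    ⟪S.toFun v - (Complex.I * μ) • (v : E), S.toFun v - (Complex.I * μ) • (v : E)⟫_A
      = ⟪S.toFun v, S.toFun v⟫_A + μ ^ 2 • ⟪(v : E), v⟫_A := by
  simp only [RightCStarModule.inner_sub_left, RightCStarModule.inner_sub_right,
    RightCStarModule.inner_smul_left_complex, RightCStarModule.inner_smul_right_complex,
    hS v v, star_mul', Complex.star_def, Complex.conj_I, Complex.conj_ofReal,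
    ← Complex.coe_smul]
  match_scalars
  · rfl
  · ring
  · linear_combination -(μ : ℂ) ^ 2 * Complex.I_sq

lemma inner_commutator_left (hS : S.Symmetric (A := A)) (hT : T.Symmetric (A := A)) {ξ ζ : E}
    (hs : ξ ∈ S.dom) (ht : ξ ∈ T.dom) (hst : S.toFun ⟨ξ, hs⟩ ∈ T.dom)
    (hts : T.toFun ⟨ξ, ht⟩ ∈ S.dom) (hs' : ζ ∈ S.dom) (ht' : ζ ∈ T.dom)
    (hst' : S.toFun ⟨ζ, hs'⟩ ∈ T.dom) (hts' : T.toFun ⟨ζ, ht'⟩ ∈ S.dom) :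
    ⟪S.toFun ⟨T.toFun ⟨ξ, ht⟩, hts⟩ - T.toFun ⟨S.toFun ⟨ξ, hs⟩, hst⟩, ζ⟫_A
      = -⟪ξ, S.toFun ⟨T.toFun ⟨ζ, ht'⟩, hts'⟩ - T.toFun ⟨S.toFun ⟨ζ, hs'⟩, hst'⟩⟫_A := by
  rw [RightCStarModule.inner_sub_left, RightCStarModule.inner_sub_right,
    hS ⟨_, hts⟩ ⟨ζ, hs'⟩, hT ⟨ξ, ht⟩ ⟨_, hst'⟩, hT ⟨_, hst⟩ ⟨ζ, ht'⟩, hS ⟨ξ, hs⟩ ⟨_, hts'⟩, neg_sub]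

variable [StarOrderedRing A]

lemma abs_mul_norm_le_norm_sub_I_smul (hS : S.Symmetric (A := A)) (μ : ℝ) (v : S.dom) :
    |μ| * ‖(v : E)‖ ≤ ‖S.toFun v - (Complex.I * μ) • (v : E)‖ := by
  rw [← Real.norm_eq_abs, ← norm_smul]
  refine RightCStarModule.norm_le_norm_of_inner_self_le ?_
  rw [hS.inner_sub_I_smul_self, RightCStarModule.inner_smul_left_real,
    RightCStarModule.inner_smul_right_real, smul_smul, ← sq]
  exact le_add_of_nonneg_left RightCStarModule.inner_self_nonneg

lemma norm_sub_I_smul_le_of_abs_le (hS : S.Symmetric (A := A)) {μ ν : ℝ} (h : |μ| ≤ |ν|)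
    (v : S.dom) :
    ‖S.toFun v - (Complex.I * μ) • (v : E)‖ ≤ ‖S.toFun v - (Complex.I * ν) • (v : E)‖ := by
  refine RightCStarModule.norm_le_norm_of_inner_self_le ?_
  rw [hS.inner_sub_I_smul_self, hS.inner_sub_I_smul_self]
  have hv : (0 : A) ≤ ⟪(v : E), v⟫_A := RightCStarModule.inner_self_nonneg
  exact add_le_add_right (smul_le_smul_of_nonneg_right (sq_le_sq.mpr h) hv) _

end Symmetric

namespace SumAssumption

variable {S T : UnboundedOperator E} (assum : SumAssumption S T)

lemma inner_res_left (hS : S.Symmetric (A := A)) {μ : ℝ} (hμ : μ ≠ 0) (x y : E) :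
    ⟪assum.res μ x, y⟫_A = ⟪x, assum.res (-μ) y⟫_A := by
  have h := hS.inner_sub_I_smul_left μ ⟨assum.res μ x, assum.res_mem_S μ hμ x⟩
    ⟨assum.res (-μ) y, assum.res_mem_S (-μ) (neg_ne_zero.mpr hμ) y⟩
  rwa [assum.res_eq μ hμ x, assum.res_eq (-μ) (neg_ne_zero.mpr hμ) y, eq_comm] at h

def coreGraph : Set (E × E) :=
  Set.range fun y : assum.core => ((y : E), T.toFun ⟨y, assum.core_sub y y.2⟩)

lemma mem_closure_coreGraph (x : T.dom) : ((x : E), T.toFun x) ∈ closure assum.coreGraph := by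
  refine Metric.mem_closure_range_iff.mpr fun ε hε => ?_
  obtain ⟨y, hy, hxy⟩ := assum.core_dense x (ε ^ 2) (by positivity)
  refine ⟨⟨y, hy⟩, max_lt ?_ ?_⟩
  · refine lt_of_pow_lt_pow_left₀ 2 hε.le ?_
    rw [dist_eq_norm]
    nlinarith [sq_nonneg ‖T.toFun x - T.toFun ⟨y, assum.core_sub y hy⟩‖]
  · refine lt_of_pow_lt_pow_left₀ 2 hε.le ?_
    rw [dist_eq_norm]
    nlinarith [sq_nonneg ‖(x : E) - y‖]

lemma dense_core (hT : Dense (T.dom : Set E)) : Dense (assum.core : Set E) := by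
  refine dense_closure.mp (hT.mono fun x hx => ?_)
  exact map_mem_closure continuous_fst (assum.mem_closure_coreGraph ⟨x, hx⟩)
    (by rintro _ ⟨y, rfl⟩; exact y.2)

/-- `X` is the bounded extension `X_μ` of `[S, T] (S − iμ)⁻¹` from the core. -/
def ExtendsCommRes {μ : ℝ} (hμ : μ ≠ 0) (X : E →L[ℂ] E) : Prop :=
  ∀ (x : E) (hx : x ∈ assum.core),
    X x = S.toFun ⟨T.toFun ⟨assum.res μ x, assum.res_mem_T μ hμ x hx⟩, assum.Tres_mem_S μ hμ x hx⟩
      - T.toFun ⟨x, assum.core_sub x hx⟩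
      - (Complex.I * (μ : ℂ)) • T.toFun ⟨assum.res μ x, assum.res_mem_T μ hμ x hx⟩

variable {assum} in
lemma apply_eq_commutator_res {μ : ℝ} {hμ : μ ≠ 0} {X : E →L[ℂ] E}
    (hX : assum.ExtendsCommRes hμ X) {z : E} (hz : z ∈ assum.core) :
    ∃ hst : S.toFun ⟨assum.res μ z, assum.res_mem_S μ hμ z⟩ ∈ T.dom,
      X z = S.toFun ⟨T.toFun ⟨assum.res μ z, assum.res_mem_T μ hμ z hz⟩, assum.Tres_mem_S μ hμ z hz⟩
        - T.toFun ⟨S.toFun ⟨assum.res μ z, assum.res_mem_S μ hμ z⟩, hst⟩ := by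
  have hSr := assum.res_eq μ hμ z
  rw [sub_eq_iff_eq_add] at hSr
  have hst : S.toFun ⟨assum.res μ z, assum.res_mem_S μ hμ z⟩ ∈ T.dom :=
    hSr ▸ add_mem (assum.core_sub z hz) (T.dom.smul_mem _ (assum.res_mem_T μ hμ z hz))
  have hTSr : T.toFun ⟨_, hst⟩ = T.toFun ⟨z, assum.core_sub z hz⟩
      + (Complex.I * μ) • T.toFun ⟨assum.res μ z, assum.res_mem_T μ hμ z hz⟩ := by
    rw [← map_smul, ← map_add]
    exact congr_arg T.toFun (Subtype.ext hSr)
  exact ⟨hst, by rw [hX z hz, hTSr, sub_sub]⟩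

variable [StarOrderedRing A]

lemma res_sub_I_smul (hS : S.Symmetric (A := A)) {μ : ℝ} (hμ : μ ≠ 0) (v : S.dom) :
    assum.res μ (S.toFun v - (Complex.I * μ) • (v : E)) = v := by
  set w := S.toFun v - (Complex.I * μ) • (v : E)
  let r : S.dom := ⟨assum.res μ w, assum.res_mem_S μ hμ w⟩
  have hr : S.toFun (r - v) - (Complex.I * μ) • ((r - v : S.dom) : E) = 0 := by
    rw [map_sub, Submodule.coe_sub, smul_sub, sub_sub_sub_comm, assum.res_eq μ hμ w, sub_self]
  have h := hS.abs_mul_norm_le_norm_sub_I_smul μ (r - v)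
  rw [hr, norm_zero] at h
  have : ‖((r - v : S.dom) : E)‖ = 0 :=
    le_antisymm (nonpos_of_mul_nonpos_right h (abs_pos.mpr hμ)) (norm_nonneg _)
  exact sub_eq_zero.mp (norm_eq_zero.mp this)

lemma abs_mul_norm_res_le (hS : S.Symmetric (A := A)) {μ : ℝ} (hμ : μ ≠ 0) (x : E) :
    |μ| * ‖assum.res μ x‖ ≤ ‖x‖ := by
  simpa only [assum.res_eq μ hμ x] using
    hS.abs_mul_norm_le_norm_sub_I_smul μ ⟨assum.res μ x, assum.res_mem_S μ hμ x⟩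

variable {assum} {μ : ℝ} {hμ : μ ≠ 0} {X : E →L[ℂ] E}

lemma mem_graph_res (hS : S.Symmetric (A := A)) (hT : T.IsClosedOp)
    (hX : assum.ExtendsCommRes hμ X) (x : T.dom) :
    (assum.res μ x, assum.res μ (X x + T.toFun x)) ∈ T.graph := by
  have hcore : ∀ y : assum.core, T.toFun ⟨assum.res μ y, assum.res_mem_T μ hμ y y.2⟩
      = assum.res μ (X y + T.toFun ⟨y, assum.core_sub y y.2⟩) := by
    intro y
    refine (assum.res_sub_I_smul hS hμ ⟨_, assum.Tres_mem_S μ hμ y y.2⟩).symm.trans ?_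
    rw [hX y y.2]
    congr 1
    abel
  -- `(y, T y) ↦ (res y, res (X y + T y))` is continuous and maps the core graph into `T.graph`
  have h := map_mem_closure (t := T.graph)
    (f := fun p : E × E => (assum.res μ p.1, assum.res μ (X p.1 + p.2))) (by fun_prop)
    (assum.mem_closure_coreGraph x)
    (by rintro _ ⟨y, rfl⟩; exact ⟨⟨_, assum.res_mem_T μ hμ y y.2⟩, by rw [hcore]⟩)
  rwa [hT.closure_eq] at h

lemma commutator_eq (hS : S.Symmetric (A := A)) (hT : T.IsClosedOp)
    (hX : assum.ExtendsCommRes hμ X) {ξ : E} (hs : ξ ∈ S.dom) (ht : ξ ∈ T.dom)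
    (hst : S.toFun ⟨ξ, hs⟩ ∈ T.dom) (hts : T.toFun ⟨ξ, ht⟩ ∈ S.dom) :
    S.toFun ⟨T.toFun ⟨ξ, ht⟩, hts⟩ - T.toFun ⟨S.toFun ⟨ξ, hs⟩, hst⟩
      = X (S.toFun ⟨ξ, hs⟩ - (Complex.I * μ) • ξ) := by
  set η := S.toFun ⟨ξ, hs⟩ - (Complex.I * μ) • ξ
  have hηT : η ∈ T.dom := sub_mem hst (T.dom.smul_mem _ ht)
  have hTη : T.toFun ⟨η, hηT⟩ = T.toFun ⟨_, hst⟩ - (Complex.I * μ) • T.toFun ⟨ξ, ht⟩ := by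
    rw [← map_smul, ← map_sub]
    rfl
  have hgraph := assum.mem_graph_res hS hT hX ⟨η, hηT⟩
  rw [show assum.res μ η = ξ from assum.res_sub_I_smul hS hμ ⟨ξ, hs⟩] at hgraph
  have hTξ := T.apply_eq_of_mem_graph hgraph ht
  have hSTξ : S.toFun ⟨_, hts⟩ = X η + T.toFun ⟨η, hηT⟩ + (Complex.I * μ) • T.toFun ⟨ξ, ht⟩ := by
    rw [← sub_eq_iff_eq_add, ← assum.res_eq μ hμ (X η + T.toFun ⟨η, hηT⟩)]
    simp only [← hTξ]
  rw [hSTξ, hTη]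
  abel

lemma norm_apply_le_of_one_le_abs (hS : S.Symmetric (A := A)) (hT : T.IsClosedOp)
    (hTd : Dense (T.dom : Set E)) (hμ₁ : 1 ≤ |μ|) (hX : assum.ExtendsCommRes hμ X)
    {X₁ : E →L[ℂ] E} (hX₁ : assum.ExtendsCommRes one_ne_zero X₁) {c : ℝ} (hc : 0 ≤ c)
    (hX₁c : ∀ z, ‖X₁ z‖ ≤ c * ‖z‖) (z : E) : ‖X z‖ ≤ c * ‖z‖ := by
  refine (assum.dense_core hTd).induction (fun z hz => ?_)
    (isClosed_le (by fun_prop) (by fun_prop)) z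
  obtain ⟨hst, hXz⟩ := assum.apply_eq_commutator_res hX hz
  set r : S.dom := ⟨assum.res μ z, assum.res_mem_S μ hμ z⟩
  rw [hXz, assum.commutator_eq hS hT hX₁ r.2 _ hst]
  calc ‖X₁ (S.toFun r - (Complex.I * (1 : ℝ)) • (r : E))‖
      ≤ c * ‖S.toFun r - (Complex.I * (1 : ℝ)) • (r : E)‖ := hX₁c _
    _ ≤ c * ‖S.toFun r - (Complex.I * μ) • (r : E)‖ :=
        mul_le_mul_of_nonneg_left (hS.norm_sub_I_smul_le_of_abs_le (by rwa [abs_one]) r) hc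
    _ = c * ‖z‖ := by rw [assum.res_eq μ hμ z]

lemma skew_res_neg_comp (hS : S.Symmetric (A := A)) (hTs : T.Symmetric (A := A))
    (hTd : Dense (T.dom : Set E)) (hX : assum.ExtendsCommRes hμ X) (z w : E) :
    ⟪assum.res (-μ) (X z), w⟫_A = -⟪z, assum.res (-μ) (X w)⟫_A := by
  refine RightCStarModule.skew_of_dense (G := fun z => assum.res (-μ) (X z)) (by fun_prop)
    (assum.dense_core hTd) (fun z hz w hw => ?_) z w
  obtain ⟨hst, hXz⟩ := assum.apply_eq_commutator_res hX hz
  obtain ⟨hst', hXw⟩ := assum.apply_eq_commutator_res hX hw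
  have hμ' : -μ ≠ 0 := neg_ne_zero.mpr hμ
  rw [assum.inner_res_left hS hμ', neg_neg, ← assum.inner_res_left hS hμ, hXz, hXw,
    hS.inner_commutator_left hTs]

lemma inner_commutator_self (hS : S.Symmetric (A := A)) (hT : T.IsClosedOp)
    (hX : assum.ExtendsCommRes hμ X) {ξ : E} (hs : ξ ∈ S.dom) (ht : ξ ∈ T.dom)
    (hst : S.toFun ⟨ξ, hs⟩ ∈ T.dom) (hts : T.toFun ⟨ξ, ht⟩ ∈ S.dom) :
    ⟪S.toFun ⟨T.toFun ⟨ξ, ht⟩, hts⟩ - T.toFun ⟨S.toFun ⟨ξ, hs⟩, hst⟩, ξ⟫_A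
      = ⟪assum.res (-μ) (X (S.toFun ⟨ξ, hs⟩ - (Complex.I * μ) • ξ)),
          S.toFun ⟨ξ, hs⟩ - (Complex.I * μ) • ξ⟫_A := by
  rw [assum.commutator_eq hS hT hX, assum.inner_res_left hS (neg_ne_zero.mpr hμ), neg_neg,
    assum.res_sub_I_smul hS hμ ⟨ξ, hs⟩]

end SumAssumption

end UnboundedOperator

namespace UnboundedOperator

variable {A E : Type*} [CStarAlgebra A] [PartialOrder A] [StarOrderedRing A]
  [NormedAddCommGroup E] [Module ℂ E] [SMul Aᵐᵒᵖ E] [RightCStarModule A E]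

theorem commutator_estimate_general
    (S T : UnboundedOperator E)
    (hSsa : S.SelfAdjointOp (A := A))
    (hTsa : T.SelfAdjointOp (A := A)) (hTreg : T.Regular (A := A))
    (assum : SumAssumption S T) :
    ∃ C : ℝ, 0 < C ∧ ∀ (ξ : E) (hs : ξ ∈ S.dom) (ht : ξ ∈ T.dom)
      (hst : S.toFun ⟨ξ, hs⟩ ∈ T.dom) (hts : T.toFun ⟨ξ, ht⟩ ∈ S.dom),
      (Complex.I • ⟪S.toFun ⟨T.toFun ⟨ξ, ht⟩, hts⟩ - T.toFun ⟨S.toFun ⟨ξ, hs⟩, hst⟩, ξ⟫_A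
          ≤ (((1 : ℝ) / 2 : ℝ) : ℂ) • ⟪S.toFun ⟨ξ, hs⟩, S.toFun ⟨ξ, hs⟩⟫_A
            + ((C : ℝ) : ℂ) • ⟪ξ, ξ⟫_A)
      ∧ (-(Complex.I • ⟪S.toFun ⟨T.toFun ⟨ξ, ht⟩, hts⟩ - T.toFun ⟨S.toFun ⟨ξ, hs⟩, hst⟩, ξ⟫_A)
          ≤ (((1 : ℝ) / 2 : ℝ) : ℂ) • ⟪S.toFun ⟨ξ, hs⟩, S.toFun ⟨ξ, hs⟩⟫_A
            + ((C : ℝ) : ℂ) • ⟪ξ, ξ⟫_A) := by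
  have hS := hSsa.symmetric
  obtain ⟨hTcl, ⟨hTd, -⟩, -⟩ := hTreg
  obtain ⟨X₁, hX₁⟩ : ∃ X₁, assum.ExtendsCommRes one_ne_zero X₁ := assum.comm_bounded 1 one_ne_zero
  obtain ⟨c, hc, hX₁c⟩ := X₁.bound
  -- `μ ≥ 1` makes `‖X_μ‖ ≤ c`, and `μ ≥ 2c` makes `G = (S + iμ)⁻¹ X_μ` a contraction by `1/2`
  set μ : ℝ := 2 * c + 2
  have hμ : 0 < μ := by positivity
  obtain ⟨X, hX⟩ : ∃ X, assum.ExtendsCommRes hμ.ne' X := assum.comm_bounded μ hμ.ne'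
  set G : E → E := fun z => assum.res (-μ) (X z)
  have hGskew := assum.skew_res_neg_comp hS hTsa.symmetric hTd hX
  have hGnorm : ∀ z, ‖G z‖ ≤ 2⁻¹ * ‖z‖ := fun z => by
    have h₁ := assum.abs_mul_norm_res_le hS (neg_ne_zero.mpr hμ.ne') (X z)
    have h₂ := assum.norm_apply_le_of_one_le_abs hS hTcl hTd (by rw [abs_of_pos hμ]; linarith)
      hX hX₁ hc.le hX₁c z
    rw [abs_neg, abs_of_pos hμ] at h₁
    nlinarith [norm_nonneg z, norm_nonneg (G z)]
  have hGG := RightCStarModule.inner_map_map_le_smul hGnorm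
    (RightCStarModule.map_op_smul_of_skew hGskew)
  refine ⟨μ ^ 2 / 2, by positivity, fun ξ hs ht hst hts => ?_⟩
  have hrhs : (2⁻¹ : ℝ) • ⟪S.toFun ⟨ξ, hs⟩ - (Complex.I * μ) • ξ,
      S.toFun ⟨ξ, hs⟩ - (Complex.I * μ) • ξ⟫_A
      = (((1 : ℝ) / 2 : ℝ) : ℂ) • ⟪S.toFun ⟨ξ, hs⟩, S.toFun ⟨ξ, hs⟩⟫_A
        + ((μ ^ 2 / 2 : ℝ) : ℂ) • ⟪ξ, ξ⟫_A := by
    rw [hS.inner_sub_I_smul_self μ ⟨ξ, hs⟩, Complex.coe_smul, Complex.coe_smul]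
    module
  rw [assum.inner_commutator_self hS hTcl hX hs ht hst hts, ← hrhs]
  exact ⟨RightCStarModule.I_smul_inner_map_self_le_of_skew hGskew (by norm_num) (hGG _),
    RightCStarModule.neg_I_smul_inner_map_self_le_of_skew hGskew (by norm_num) (hGG _)⟩

/-- **Commutator estimate.** Let `S, T` be selfadjoint regular operators in a Hilbert
C⋆-module `E` over `A` satisfying the standing assumption. Then there is a constant `C > 0`
such that for every `ξ ∈ dom [S,T]` one has
`± i ⟪[S,T] ξ, ξ⟫ ≤ (1/2) ⟪S ξ, S ξ⟫ + C ⟪ξ, ξ⟫` as selfadjoint elements of `A`. -/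
theorem commutator_estimate
    (S T : UnboundedOperator E)
    (hSsa : S.SelfAdjointOp (A := A)) (hSreg : S.Regular (A := A))
    (hTsa : T.SelfAdjointOp (A := A)) (hTreg : T.Regular (A := A))
    (assum : SumAssumption S T) :
    ∃ C : ℝ, 0 < C ∧ ∀ (ξ : E) (hs : ξ ∈ S.dom) (ht : ξ ∈ T.dom)
      (hst : S.toFun ⟨ξ, hs⟩ ∈ T.dom) (hts : T.toFun ⟨ξ, ht⟩ ∈ S.dom),
      (Complex.I • ⟪S.toFun ⟨T.toFun ⟨ξ, ht⟩, hts⟩ - T.toFun ⟨S.toFun ⟨ξ, hs⟩, hst⟩, ξ⟫_A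
          ≤ (((1 : ℝ) / 2 : ℝ) : ℂ) • ⟪S.toFun ⟨ξ, hs⟩, S.toFun ⟨ξ, hs⟩⟫_A
            + ((C : ℝ) : ℂ) • ⟪ξ, ξ⟫_A)
      ∧ (-(Complex.I • ⟪S.toFun ⟨T.toFun ⟨ξ, ht⟩, hts⟩ - T.toFun ⟨S.toFun ⟨ξ, hs⟩, hst⟩, ξ⟫_A)
          ≤ (((1 : ℝ) / 2 : ℝ) : ℂ) • ⟪S.toFun ⟨ξ, hs⟩, S.toFun ⟨ξ, hs⟩⟫_A
            + ((C : ℝ) : ℂ) • ⟪ξ, ξ⟫_A) :=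
  commutator_estimate_general S T hSsa hTsa hTreg assum

end UnboundedOperator

end
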